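/- Let n, m, k be positive integers, ε_f, ε_g ≥ 0, and P a symmetric positive definite real (n+m)×(n+m) matrix. Let Ā be a real n×(n+m) matrix, K̄ a real m×(n+m) matrix, C̄ ∈ ℝⁿ⁺ᵐ, Q a real k×(n+m) matrix, f ∈ ℝᵏ, and η₁, η₂, η₃ > 0. Set Λ := P(R₁Ā + R₂K̄) + (R₁Ā + R₂K̄)ᵀP. Suppose the symmetric block matrix with diagonal block sizes (n+m, n, n, 1, m) given by [[Λ + η₁ε_f²I_{n+m} − η₃QᵀQ, PR₁, PR₁, PC̄ − η₃Qᵀf, PR₂], [⋆, R₁ᵀPR₁ − η₁Iₙ, 0, 0, 0], [⋆, ⋆, R₁ᵀPR₁ − η₂Iₙ, 0, 0], [⋆, ⋆, ⋆, η₂ε_g² − η₃(fᵀf − 1), 0], [⋆, ⋆, ⋆, ⋆, −(1/2)R₂ᵀPR₂]] is negative definite (where ⋆ denotes entries determined by symmetry). Then for all x̄ ∈ ℝⁿ⁺ᵐ, a ∈ ℝⁿ and c ∈ ℝⁿ satisfying ‖a‖ ≤ ε_f‖x̄‖, ‖c‖ ≤ ε_g and ‖Qx̄ + f‖ ≤ 1,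 one has x̄ᵀΛx̄ + 2 x̄ᵀ P R₂ (R₂ᵀPR₂)⁻¹ R₂ᵀ P x̄ + 2 x̄ᵀ P R₁ a + aᵀ R₁ᵀ P R₁ a + 2 x̄ᵀ P C̄ + 2 x̄ᵀ P R₁ c + cᵀ R₁ᵀ P R₁ c < 0. -/

import Mathlib

/-!
Evaluate the quadratic form of the LMI at `z = (x̄, a, c, 1, 2 S_u⁻¹ R₂ᵀ P x̄)`. With this choice
of the last component the `S_u` block contributes exactly the feedback term
`2 x̄ᵀ P R₂ S_u⁻¹ R₂ᵀ P x̄`, and the form then equals the left side of (34) plus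
`η₁ (ε_f² ‖x̄‖² - ‖a‖²) + η₂ (ε_g² - ‖c‖²) + η₃ (1 - ‖Q x̄ + f‖²)`,
which is nonnegative under the constraints (S-procedure).
-/

open Matrix

/-- The block matrix `R₁ = [Iₙ; 0] : ℝ^{(n+m)×n}`. -/
def R1 (n m : ℕ) : Matrix (Fin n ⊕ Fin m) (Fin n) ℝ :=
  Matrix.of fun i j => if i = Sum.inl j then 1 else 0

/-- The block matrix `R₂ = [0; Iₘ] : ℝ^{(n+m)×m}`. -/
def R2 (n m : ℕ) : Matrix (Fin n ⊕ Fin m) (Fin m) ℝ :=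
  Matrix.of fun i j => if i = Sum.inr j then 1 else 0

/-- Matrix–vector multiplication viewed as a map between Euclidean spaces
(so that `‖·‖` is the Euclidean norm). -/
def Matrix.mulVecE {ι κ : Type*} [Fintype κ] (M : Matrix ι κ ℝ)
    (x : EuclideanSpace ℝ κ) : EuclideanSpace ℝ ι :=
  WithLp.toLp 2 (M.mulVec x)

lemma dotProduct_mul_mulVec_of_isSymm {ι κ α : Type*} [Fintype ι] [Fintype κ] [CommSemiring α]
    {P : Matrix ι ι α} (hP : P.IsSymm) (R : Matrix ι κ α) (x : ι → α) (z : κ → α) :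
    x ⬝ᵥ (P * R) *ᵥ z = (Rᵀ * P) *ᵥ x ⬝ᵥ z := by
  rw [dotProduct_mulVec, ← mulVec_transpose, transpose_mul, hP.eq]

-- For singular `S` both sides vanish, since then `S⁻¹ = 0`.
lemma inv_mulVec_dotProduct_mulVec_inv_mulVec {ι α : Type*} [Fintype ι] [DecidableEq ι]
    [CommRing α] (S : Matrix ι ι α) (w : ι → α) :
    S⁻¹ *ᵥ w ⬝ᵥ S *ᵥ (S⁻¹ *ᵥ w) = w ⬝ᵥ S⁻¹ *ᵥ w := by
  by_cases h : IsUnit S.det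
  · rw [mulVec_mulVec, mul_nonsing_inv S h, one_mulVec, dotProduct_comm]
  · simp [nonsing_inv_apply_not_isUnit S h]

lemma EuclideanSpace.dotProduct_self_eq_norm_sq {ι : Type*} [Fintype ι]
    (a : EuclideanSpace ℝ ι) : a.ofLp ⬝ᵥ a.ofLp = ‖a‖ ^ 2 := by
  rw [EuclideanSpace.real_norm_sq_eq]
  simp [dotProduct, sq]

lemma EuclideanSpace.dotProduct_self_le_sq_of_norm_le {ι : Type*} [Fintype ι]
    {a : EuclideanSpace ℝ ι} {r : ℝ} (h : ‖a‖ ≤ r) : a.ofLp ⬝ᵥ a.ofLp ≤ r ^ 2 := by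
  rw [dotProduct_self_eq_norm_sq]
  exact pow_le_pow_left₀ (norm_nonneg a) h 2

theorem lmi_24_implies_inequality_34_general
    (n m k : ℕ)
    (εf εg : ℝ)
    (P : Matrix (Fin n ⊕ Fin m) (Fin n ⊕ Fin m) ℝ) (hP : P.PosDef)
    (Cbar : Fin n ⊕ Fin m → ℝ)
    (Q : Matrix (Fin k) (Fin n ⊕ Fin m) ℝ) (f : EuclideanSpace ℝ (Fin k))
    (η₁ η₂ η₃ : ℝ) (hη₁ : 0 < η₁) (hη₂ : 0 < η₂) (hη₃ : 0 < η₃)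
    (Λ : Matrix (Fin n ⊕ Fin m) (Fin n ⊕ Fin m) ℝ)
    (hLMI : ∀ (z₀ : Fin n ⊕ Fin m → ℝ) (z₁ z₂ : Fin n → ℝ) (z₃ : ℝ) (z₄ : Fin m → ℝ),
      ¬(z₀ = 0 ∧ z₁ = 0 ∧ z₂ = 0 ∧ z₃ = 0 ∧ z₄ = 0) →
      z₀ ⬝ᵥ (Λ + (η₁ * εf ^ 2) • (1 : Matrix (Fin n ⊕ Fin m) (Fin n ⊕ Fin m) ℝ)
            - η₃ • (Qᵀ * Q)).mulVec z₀
        + 2 * (z₀ ⬝ᵥ (P * R1 n m).mulVec z₁)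
        + 2 * (z₀ ⬝ᵥ (P * R1 n m).mulVec z₂)
        + 2 * z₃ * (z₀ ⬝ᵥ (P.mulVec Cbar - η₃ • Qᵀ.mulVec f))
        + 2 * (z₀ ⬝ᵥ (P * R2 n m).mulVec z₄)
        + z₁ ⬝ᵥ ((R1 n m)ᵀ * P * R1 n m - η₁ • (1 : Matrix (Fin n) (Fin n) ℝ)).mulVec z₁
        + z₂ ⬝ᵥ ((R1 n m)ᵀ * P * R1 n m - η₂ • (1 : Matrix (Fin n) (Fin n) ℝ)).mulVec z₂
        + (η₂ * εg ^ 2 - η₃ * (f ⬝ᵥ f - 1)) * z₃ ^ 2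
        - (1 / 2) * (z₄ ⬝ᵥ ((R2 n m)ᵀ * P * R2 n m).mulVec z₄) < 0) :
    ∀ (xbar : EuclideanSpace ℝ (Fin n ⊕ Fin m)) (a c : EuclideanSpace ℝ (Fin n)),
      ‖a‖ ≤ εf * ‖xbar‖ → ‖c‖ ≤ εg → ‖Q.mulVecE xbar + f‖ ≤ 1 →
      xbar ⬝ᵥ Λ.mulVec xbar
        + 2 * (xbar ⬝ᵥ (P * R2 n m * ((R2 n m)ᵀ * P * R2 n m)⁻¹
            * (R2 n m)ᵀ * P).mulVec xbar)
        + 2 * (xbar ⬝ᵥ (P * R1 n m).mulVec a)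
        + a ⬝ᵥ ((R1 n m)ᵀ * P * R1 n m).mulVec a
        + 2 * (xbar ⬝ᵥ P.mulVec Cbar)
        + 2 * (xbar ⬝ᵥ (P * R1 n m).mulVec c)
        + c ⬝ᵥ ((R1 n m)ᵀ * P * R1 n m).mulVec c < 0 := by
  intro x a c ha hc hq
  set S := (R2 n m)ᵀ * P * R2 n m
  set w := ((R2 n m)ᵀ * P) *ᵥ x.ofLp
  have hPR₂ (z : Fin m → ℝ) : x.ofLp ⬝ᵥ (P * R2 n m) *ᵥ z = w ⬝ᵥ z :=
    dotProduct_mul_mulVec_of_isSymm (isHermitian_iff_isSymm.mp hP.isHermitian) _ _ _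
  have hfeedback :
      (P * R2 n m * S⁻¹ * (R2 n m)ᵀ * P) *ᵥ x.ofLp = (P * R2 n m) *ᵥ (S⁻¹ *ᵥ w) := by
    simp only [w, mulVec_mulVec, Matrix.mul_assoc]
  have hQ : x.ofLp ⬝ᵥ (Qᵀ * Q) *ᵥ x.ofLp = Q *ᵥ x.ofLp ⬝ᵥ Q *ᵥ x.ofLp := by
    rw [← mulVec_mulVec, dotProduct_transpose_mulVec, dotProduct_comm]
  have hform := hLMI x a c 1 ((2 : ℝ) • S⁻¹ *ᵥ w) (by simp)
  simp only [sub_mulVec, add_mulVec, smul_mulVec, one_mulVec, mulVec_smul, dotProduct_sub,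
    dotProduct_add, dotProduct_smul, smul_dotProduct, smul_eq_mul, hPR₂, hQ,
    inv_mulVec_dotProduct_mulVec_inv_mulVec, dotProduct_transpose_mulVec,
    dotProduct_comm f.ofLp] at hform
  have ha2 := EuclideanSpace.dotProduct_self_le_sq_of_norm_le ha
  rw [mul_pow, ← x.dotProduct_self_eq_norm_sq] at ha2
  have hc2 := EuclideanSpace.dotProduct_self_le_sq_of_norm_le hc
  have hq2 := EuclideanSpace.dotProduct_self_le_sq_of_norm_le hq
  simp only [mulVecE, WithLp.ofLp_add, add_dotProduct, dotProduct_add,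
    dotProduct_comm f.ofLp] at hq2
  rw [hfeedback, hPR₂]
  linarith [mul_le_mul_of_nonneg_left ha2 hη₁.le, mul_le_mul_of_nonneg_left hc2 hη₂.le,
    mul_le_mul_of_nonneg_left hq2 hη₃.le]

/-- LMI (24) implies inequality (34): negative definiteness of the
symmetric block matrix with diagonal block sizes `(n+m, n, n, 1, m)`,
`[[Λ + η₁ε_f²I − η₃QᵀQ, PR₁, PR₁, PC̄ − η₃Qᵀf, PR₂],
  [⋆, R₁ᵀPR₁ − η₁Iₙ, 0, 0, 0], [⋆, ⋆, R₁ᵀPR₁ − η₂Iₙ, 0, 0],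
  [⋆, ⋆, ⋆, η₂ε_g² − η₃(fᵀf − 1), 0], [⋆, ⋆, ⋆, ⋆, −(1/2)R₂ᵀPR₂]]`
(expressed here, as in the paper, via its quadratic form: `zᵀMz < 0` for all `z ≠ 0`),
implies, for all `x̄`, `a`, `c` with `‖a‖ ≤ ε_f‖x̄‖`, `‖c‖ ≤ ε_g`, `‖Qx̄ + f‖ ≤ 1`:
`x̄ᵀΛx̄ + 2x̄ᵀPR₂(R₂ᵀPR₂)⁻¹R₂ᵀPx̄ + 2x̄ᵀPR₁a + aᵀR₁ᵀPR₁a + 2x̄ᵀPC̄ + 2x̄ᵀPR₁c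
  + cᵀR₁ᵀPR₁c < 0`. -/
theorem lmi_24_implies_inequality_34
    (n m k : ℕ) (hn : 0 < n) (hm : 0 < m) (hk : 0 < k)
    (εf εg : ℝ) (hεf : 0 ≤ εf) (hεg : 0 ≤ εg)
    (P : Matrix (Fin n ⊕ Fin m) (Fin n ⊕ Fin m) ℝ) (hP : P.PosDef)
    (Abar : Matrix (Fin n) (Fin n ⊕ Fin m) ℝ)
    (Kbar : Matrix (Fin m) (Fin n ⊕ Fin m) ℝ)
    (Cbar : Fin n ⊕ Fin m → ℝ)
    (Q : Matrix (Fin k) (Fin n ⊕ Fin m) ℝ) (f : EuclideanSpace ℝ (Fin k))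
    (η₁ η₂ η₃ : ℝ) (hη₁ : 0 < η₁) (hη₂ : 0 < η₂) (hη₃ : 0 < η₃)
    (Λ : Matrix (Fin n ⊕ Fin m) (Fin n ⊕ Fin m) ℝ)
    (hΛ : Λ = P * (R1 n m * Abar + R2 n m * Kbar)
      + (R1 n m * Abar + R2 n m * Kbar)ᵀ * P)
    (hLMI : ∀ (z₀ : Fin n ⊕ Fin m → ℝ) (z₁ z₂ : Fin n → ℝ) (z₃ : ℝ) (z₄ : Fin m → ℝ),
      ¬(z₀ = 0 ∧ z₁ = 0 ∧ z₂ = 0 ∧ z₃ = 0 ∧ z₄ = 0) →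
      z₀ ⬝ᵥ (Λ + (η₁ * εf ^ 2) • (1 : Matrix (Fin n ⊕ Fin m) (Fin n ⊕ Fin m) ℝ)
            - η₃ • (Qᵀ * Q)).mulVec z₀
        + 2 * (z₀ ⬝ᵥ (P * R1 n m).mulVec z₁)
        + 2 * (z₀ ⬝ᵥ (P * R1 n m).mulVec z₂)
        + 2 * z₃ * (z₀ ⬝ᵥ (P.mulVec Cbar - η₃ • Qᵀ.mulVec f))
        + 2 * (z₀ ⬝ᵥ (P * R2 n m).mulVec z₄)
        + z₁ ⬝ᵥ ((R1 n m)ᵀ * P * R1 n m - η₁ • (1 : Matrix (Fin n) (Fin n) ℝ)).mulVec z₁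
        + z₂ ⬝ᵥ ((R1 n m)ᵀ * P * R1 n m - η₂ • (1 : Matrix (Fin n) (Fin n) ℝ)).mulVec z₂
        + (η₂ * εg ^ 2 - η₃ * (f ⬝ᵥ f - 1)) * z₃ ^ 2
        - (1 / 2) * (z₄ ⬝ᵥ ((R2 n m)ᵀ * P * R2 n m).mulVec z₄) < 0) :
    ∀ (xbar : EuclideanSpace ℝ (Fin n ⊕ Fin m)) (a c : EuclideanSpace ℝ (Fin n)),
      ‖a‖ ≤ εf * ‖xbar‖ → ‖c‖ ≤ εg → ‖Q.mulVecE xbar + f‖ ≤ 1 →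
      xbar ⬝ᵥ Λ.mulVec xbar
        + 2 * (xbar ⬝ᵥ (P * R2 n m * ((R2 n m)ᵀ * P * R2 n m)⁻¹
            * (R2 n m)ᵀ * P).mulVec xbar)
        + 2 * (xbar ⬝ᵥ (P * R1 n m).mulVec a)
        + a ⬝ᵥ ((R1 n m)ᵀ * P * R1 n m).mulVec a
        + 2 * (xbar ⬝ᵥ P.mulVec Cbar)
        + 2 * (xbar ⬝ᵥ (P * R1 n m).mulVec c)
        + c ⬝ᵥ ((R1 n m)ᵀ * P * R1 n m).mulVec c < 0 :=
  lmi_24_implies_inequality_34_general n m k εf εg P hP Cbar Q f η₁ η₂ η₃ hη₁ hη₂ hη₃ Λ hLMI
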